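/- Every slice of the unit ball of Read's space ℛ has diameter at least 2/3; more generally, every nonempty weakly open subset of the unit ball of ℛ has diameter at least 2/3. -/

import Mathlib

open Filter Topology NormedSpace

/-- The sup norm of a real sequence. -/
noncomputable def supNorm (x : ℕ → ℝ) : ℝ := ⨆ k, |x k|

/-- The duality pairing `⟨x, v⟩ = ∑ₖ x k * v k`. -/
noncomputable def pairing (x v : ℕ → ℝ) : ℝ := ∑' k, x k * v k

/-- Read's norm `|||x||| = ‖x‖_∞ + ∑ₙ rₙ |⟨x, vₙ⟩|`. -/
noncomputable def readNorm (r : ℕ → ℝ) (v : ℕ → ℕ → ℝ) (x : ℕ → ℝ) : ℝ :=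
  supNorm x + ∑' n, r n * |pairing x (v n)|

/-! The unit vectors `eₖ` of `ℛ` have norm `≥ 1` and are weakly null, because their signed
finite sums have norm at most `1 + ∑ rₙ ≤ 3`. Let `x` lie in the unit ball, with `ℓ₁`-part
`S = ∑ rₙ |⟨x, vₙ⟩|`, and put `t = 1 - S`. Then `‖x‖_∞ ≤ t`, and `t ≥ 1/3` because
`S ≤ 2 ‖x‖_∞ ≤ 2t`. Perturbing `x` at the `k`-th coordinate gives
`|||x ± t eₖ||| ≤ 1 + |xₖ| + t ∑ₙ rₙ |vₙ(k)|`, which tends to `1`. So the normalized vectors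
`x ± t eₖ` lie in the unit ball, converge weakly to `x`, and are about `2t ≥ 2/3` apart. A slice
is a weakly open set that meets the unit ball. -/

section Sequences

variable {x w : ℕ → ℝ} {M : ℝ}

lemma supNorm_le_of_abs_le (hM : 0 ≤ M) (h : ∀ k, |x k| ≤ M) : supNorm x ≤ M :=
  Real.iSup_le h hM

lemma abs_le_supNorm (hx : BddAbove (Set.range fun k => |x k|)) (k : ℕ) : |x k| ≤ supNorm x :=
  le_ciSup hx k

lemma summable_abs_mul_of_abs_le (h : ∀ k, |x k| ≤ M) (hw : Summable fun k => |w k|) :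
    Summable fun k => |x k * w k| :=
  Summable.of_nonneg_of_le (fun _ => abs_nonneg _)
    (fun k => by rw [abs_mul]; exact mul_le_mul_of_nonneg_right (h k) (abs_nonneg _))
    (hw.mul_left M)

lemma abs_pairing_le (h : ∀ k, |x k| ≤ M) (hw : Summable fun k => |w k|) :
    |pairing x w| ≤ M * ∑' k, |w k| := by
  have hxw := summable_abs_mul_of_abs_le h hw
  calc |pairing x w| ≤ ∑' k, |x k * w k| := by
        rw [pairing, ← Real.norm_eq_abs]
        exact norm_tsum_le_tsum_norm hxw
    _ ≤ ∑' k, M * |w k| := hxw.tsum_le_tsum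
        (fun k => by rw [abs_mul]; exact mul_le_mul_of_nonneg_right (h k) (abs_nonneg _))
        (hw.mul_left M)
    _ = M * ∑' k, |w k| := tsum_mul_left

lemma pairing_single (k : ℕ) (w : ℕ → ℝ) : pairing (Pi.single k 1) w = w k := by
  rw [pairing, tsum_eq_single k fun j hj => by simp [hj]]
  simp

lemma pairing_add_smul_single (h : ∀ k, |x k| ≤ M) (hw : Summable fun k => |w k|) (c : ℝ)
    (k : ℕ) : pairing (x + c • Pi.single k 1) w = pairing x w + c * w k := by
  have hsingle : Summable fun j => c * ((Pi.single k 1 : ℕ → ℝ) j * w j) :=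
    (hasSum_single k fun j hj => by simp [hj]).summable
  rw [← pairing_single k w, pairing, pairing, pairing, ← tsum_mul_left,
    ← (summable_abs_mul_of_abs_le h hw).of_abs.tsum_add hsingle]
  congr 1 with j
  simp only [Pi.add_apply, Pi.smul_apply, smul_eq_mul]
  ring

lemma supNorm_single (k : ℕ) : supNorm (Pi.single k 1) = 1 := by
  have hle : ∀ j, |(Pi.single k 1 : ℕ → ℝ) j| ≤ 1 := fun j => by
    rcases eq_or_ne j k with rfl | hj <;> simp [*]
  refine le_antisymm (supNorm_le_of_abs_le zero_le_one hle) ?_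
  simpa using abs_le_supNorm ⟨1, Set.forall_mem_range.2 hle⟩ k

lemma readNorm_single (r : ℕ → ℝ) (v : ℕ → ℕ → ℝ) (k : ℕ) :
    readNorm r v (Pi.single k 1) = 1 + ∑' n, r n * |v n k| := by
  simp only [readNorm, supNorm_single, pairing_single]

end Sequences

structure IsReadNormData (r : ℕ → ℝ) (v : ℕ → ℕ → ℝ) : Prop where
  nonneg : ∀ n, 0 ≤ r n
  summable : Summable r
  summable_abs : ∀ n, Summable fun k => |v n k|
  tsum_abs : ∀ n, ∑' k, |v n k| = 1

namespace IsReadNormData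

variable {r : ℕ → ℝ} {v : ℕ → ℕ → ℝ} {x : ℕ → ℝ} {M : ℝ}

lemma abs_le_one (hR : IsReadNormData r v) (n k : ℕ) : |v n k| ≤ 1 :=
  hR.tsum_abs n ▸ (hR.summable_abs n).le_tsum k fun _ _ => abs_nonneg _

lemma abs_pairing_le (hR : IsReadNormData r v) (h : ∀ k, |x k| ≤ M) (n : ℕ) :
    |pairing x (v n)| ≤ M := by
  simpa [hR.tsum_abs n] using _root_.abs_pairing_le h (hR.summable_abs n)

lemma summable_mul_abs_pairing (hR : IsReadNormData r v) (h : ∀ k, |x k| ≤ M) :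
    Summable fun n => r n * |pairing x (v n)| :=
  Summable.of_nonneg_of_le (fun n => mul_nonneg (hR.nonneg n) (abs_nonneg _))
    (fun n => mul_le_mul_of_nonneg_left (hR.abs_pairing_le h n) (hR.nonneg n))
    (hR.summable.mul_right M)

lemma tsum_mul_abs_pairing_le (hR : IsReadNormData r v) (h : ∀ k, |x k| ≤ M) :
    ∑' n, r n * |pairing x (v n)| ≤ (∑' n, r n) * M := by
  rw [← tsum_mul_right]
  exact (hR.summable_mul_abs_pairing h).tsum_le_tsum
    (fun n => mul_le_mul_of_nonneg_left (hR.abs_pairing_le h n) (hR.nonneg n))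
    (hR.summable.mul_right M)

lemma readNorm_le (hR : IsReadNormData r v) (hM : 0 ≤ M) (h : ∀ k, |x k| ≤ M) :
    readNorm r v x ≤ (1 + ∑' n, r n) * M := by
  have := hR.tsum_mul_abs_pairing_le h
  have := supNorm_le_of_abs_le hM h
  rw [readNorm]
  linarith

lemma mul_abs_le (hR : IsReadNormData r v) (n k : ℕ) : r n * |v n k| ≤ r n :=
  mul_le_of_le_one_right (hR.nonneg n) (hR.abs_le_one n k)

lemma summable_mul_abs (hR : IsReadNormData r v) (k : ℕ) : Summable fun n => r n * |v n k| :=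
  Summable.of_nonneg_of_le (fun n => mul_nonneg (hR.nonneg n) (abs_nonneg _))
    (fun n => hR.mul_abs_le n k) hR.summable

lemma tendsto_tsum_mul_abs (hR : IsReadNormData r v) :
    Tendsto (fun k => ∑' n, r n * |v n k|) atTop (𝓝 0) := by
  have := tendsto_tsum_of_dominated_convergence (g := fun _ => (0 : ℝ)) hR.summable
    (fun n => by simpa using ((hR.summable_abs n).tendsto_atTop_zero).const_mul (r n))
    (Eventually.of_forall fun k n => by
      rw [Real.norm_eq_abs, abs_of_nonneg (mul_nonneg (hR.nonneg n) (abs_nonneg _))]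
      exact hR.mul_abs_le n k)
  rwa [tsum_zero] at this

lemma one_third_le_one_sub_tsum (hR : IsReadNormData r v) (hr2 : ∑' n, r n ≤ 2)
    (hx : BddAbove (Set.range fun k => |x k|)) (h1 : readNorm r v x ≤ 1) :
    1 / 3 ≤ 1 - ∑' n, r n * |pairing x (v n)| := by
  have hsup : 0 ≤ supNorm x := (abs_nonneg _).trans (abs_le_supNorm hx 0)
  have hS := (hR.tsum_mul_abs_pairing_le (abs_le_supNorm hx)).trans
    (mul_le_mul_of_nonneg_right hr2 hsup)
  rw [readNorm] at h1
  linarith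

lemma readNorm_add_smul_single_le (hR : IsReadNormData r v) {c : ℝ} (h : ∀ j, |x j| ≤ |c|)
    (k : ℕ) : readNorm r v (x + c • Pi.single k 1) ≤
      |x k| + |c| + ∑' n, r n * |pairing x (v n)| + |c| * ∑' n, r n * |v n k| := by
  have hcoord : ∀ j, |(x + c • Pi.single k 1 : ℕ → ℝ) j| ≤ |x k| + |c| := fun j => by
    rcases eq_or_ne j k with rfl | hj
    · simpa using abs_add_le (x j) c
    · simpa [hj] using (h j).trans (le_add_of_nonneg_left (abs_nonneg (x k)))
  have hterm : ∀ n, r n * |pairing (x + c • Pi.single k 1) (v n)| ≤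
      r n * |pairing x (v n)| + |c| * (r n * |v n k|) := fun n => by
    rw [pairing_add_smul_single h (hR.summable_abs n)]
    calc r n * |pairing x (v n) + c * v n k| ≤ r n * (|pairing x (v n)| + |c| * |v n k|) :=
          mul_le_mul_of_nonneg_left ((abs_add_le _ _).trans_eq (by rw [abs_mul])) (hR.nonneg n)
      _ = _ := by ring
  have hsup := supNorm_le_of_abs_le (by positivity) hcoord
  have hsum : ∑' n, r n * |pairing (x + c • Pi.single k 1) (v n)| ≤
      ∑' n, r n * |pairing x (v n)| + |c| * ∑' n, r n * |v n k| := by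
    rw [← tsum_mul_left, ← (hR.summable_mul_abs_pairing h).tsum_add
      ((hR.summable_mul_abs k).mul_left _)]
    exact (hR.summable_mul_abs_pairing hcoord).tsum_le_tsum hterm
      ((hR.summable_mul_abs_pairing h).add ((hR.summable_mul_abs k).mul_left _))
  rw [readNorm]
  linarith

end IsReadNormData

abbrev weakTopology (X : Type*) [NormedAddCommGroup X] [NormedSpace ℝ X] : TopologicalSpace X :=
  .induced (fun x (g : StrongDual ℝ X) => g x) Pi.topologicalSpace

section WeakTopology

variable {X : Type*} [NormedAddCommGroup X] [NormedSpace ℝ X]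

/-- Testing `g` on `∑ₖ sign (g uₖ) • uₖ` bounds `∑ₖ |g uₖ|`. -/
lemma tendsto_apply_zero_of_norm_sum_smul_le {u : ℕ → X} {C : ℝ}
    (h : ∀ (F : Finset ℕ) (σ : ℕ → ℝ), (∀ k, |σ k| ≤ 1) → ‖∑ k ∈ F, σ k • u k‖ ≤ C)
    (g : StrongDual ℝ X) : Tendsto (fun k => g (u k)) atTop (𝓝 0) := by
  have hsign : ∀ k, |((SignType.sign (g (u k)) : SignType) : ℝ)| ≤ 1 := fun k => by
    rcases SignType.sign (g (u k)) with _ | _ | _ <;> simp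
  have hbound : ∀ F : Finset ℕ, ∑ k ∈ F, |g (u k)| ≤ ‖g‖ * C := fun F =>
    calc ∑ k ∈ F, |g (u k)| = g (∑ k ∈ F, (SignType.sign (g (u k)) : ℝ) • u k) := by
          simp [map_sum, sign_mul_self]
      _ ≤ ‖g‖ * C := (le_abs_self _).trans ((g.le_opNorm _).trans
          (mul_le_mul_of_nonneg_left (h F _ hsign) (norm_nonneg g)))
  exact (summable_of_sum_le (fun k => abs_nonneg _) hbound).of_abs.tendsto_atTop_zero

lemma StrongDual.exists_norm_le_one_lt_apply (f : StrongDual ℝ X) {δ : ℝ} (hδ : 0 < δ) :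
    ∃ x : X, ‖x‖ ≤ 1 ∧ ‖f‖ - δ < f x := by
  obtain ⟨x, hx, hfx⟩ := f.exists_lt_apply_of_lt_opNorm (sub_lt_self ‖f‖ hδ)
  rcases lt_abs.1 hfx with hpos | hneg
  · exact ⟨x, hx.le, hpos⟩
  · exact ⟨-x, by simpa using hx.le, by simpa using hneg⟩

lemma tendsto_apply_smul_add_smul {u : ℕ → X}
    (hu : ∀ g : StrongDual ℝ X, Tendsto (fun k => g (u k)) atTop (𝓝 0)) {a : ℕ → ℝ}
    (ha : Tendsto a atTop (𝓝 1)) (x : X) (c : ℝ) :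
    Tendsto (fun k (g : StrongDual ℝ X) => g (a k • (x + c • u k))) atTop (𝓝 fun g => g x) := by
  refine tendsto_pi_nhds.2 fun g => ?_
  have := ha.mul (tendsto_const_nhds (x := g x) |>.add ((hu g).const_mul c))
  simpa [mul_add] using this

theorem two_mul_le_diam_inter_closedBall {u : ℕ → X}
    (hu : ∀ g : StrongDual ℝ X, Tendsto (fun k => g (u k)) atTop (𝓝 0)) (hu1 : ∀ k, 1 ≤ ‖u k‖)
    {x : X} {t : ℝ} {η : ℕ → ℝ} (hη0 : ∀ k, 0 ≤ η k) (hη : Tendsto η atTop (𝓝 0))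
    (hadd : ∀ k, ‖x + t • u k‖ ≤ 1 + η k) (hsub : ∀ k, ‖x - t • u k‖ ≤ 1 + η k)
    {U : Set X} (hU : IsOpen[weakTopology X] U) (hxU : x ∈ U) :
    2 * t ≤ Metric.diam (U ∩ Metric.closedBall 0 1) := by
  obtain ⟨W, hW, rfl⟩ := isOpen_induced_iff.1 hU
  set a : ℕ → ℝ := fun k => (1 + η k)⁻¹
  have ha : Tendsto a atTop (𝓝 1) := by
    simpa using (tendsto_const_nhds.add hη).inv₀ (by norm_num : (1 : ℝ) + 0 ≠ 0)
  have hball : ∀ k (y : X), ‖y‖ ≤ 1 + η k → a k • y ∈ Metric.closedBall 0 1 := fun k y hy => by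
    have hpos : 0 < 1 + η k := by linarith [hη0 k]
    rw [mem_closedBall_zero_iff, norm_smul, Real.norm_eq_abs, abs_of_pos (inv_pos.2 hpos)]
    exact inv_mul_le_one_of_le₀ hy hpos.le
  have hdist : ∀ k, a k * (2 * t) ≤ dist (a k • (x + t • u k)) (a k • (x + (-t) • u k)) :=
    fun k => by
      rw [dist_eq_norm, show a k • (x + t • u k) - a k • (x + (-t) • u k) = (a k * (2 * t)) • u k
        by module, norm_smul, Real.norm_eq_abs]
      exact (le_abs_self _).trans (le_mul_of_one_le_right (abs_nonneg _) (hu1 k))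
  refine le_of_forall_lt fun c hc => ?_
  have hnear : ∀ s : ℝ, ∀ᶠ k in atTop,
      a k • (x + s • u k) ∈ (fun y (g : StrongDual ℝ X) => g y) ⁻¹' W :=
    fun s => (tendsto_apply_smul_add_smul hu ha x s).eventually (hW.mem_nhds hxU)
  have hfar : ∀ᶠ k in atTop, c < a k * (2 * t) :=
    (ha.mul_const (2 * t)).eventually (eventually_gt_nhds (by simpa using hc))
  obtain ⟨k, hplus, hminus, hck⟩ := ((hnear t).and ((hnear (-t)).and hfar)).exists
  have hsub' : ‖x + (-t) • u k‖ ≤ 1 + η k := by rw [neg_smul, ← sub_eq_add_neg]; exact hsub k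
  exact hck.trans_le ((hdist k).trans (Metric.dist_le_diam_of_mem
    (Metric.isBounded_closedBall.subset Set.inter_subset_right)
    ⟨hplus, hball k _ (hadd k)⟩ ⟨hminus, hball k _ hsub'⟩))

end WeakTopology

section ReadSpace

variable {r : ℕ → ℝ} {v : ℕ → ℕ → ℝ} {X : Type*} [NormedAddCommGroup X] [NormedSpace ℝ X]
  {e : X →ₗ[ℝ] (ℕ → ℝ)} {u : ℕ → X}

lemma tendsto_apply_zero_of_map_eq_single (hR : IsReadNormData r v) (hr2 : ∑' n, r n ≤ 2)
    (hnorm : ∀ x, ‖x‖ = readNorm r v (e x)) (hu : ∀ k, e (u k) = Pi.single k 1)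
    (g : StrongDual ℝ X) : Tendsto (fun k => g (u k)) atTop (𝓝 0) := by
  refine tendsto_apply_zero_of_norm_sum_smul_le (C := 3) (fun F σ hσ => ?_) g
  have hcoord : ∀ j, |e (∑ k ∈ F, σ k • u k) j| ≤ 1 := fun j => by
    simp only [map_sum, map_smul, hu, Finset.sum_apply, Pi.smul_apply, Pi.single_apply,
      smul_eq_mul, mul_ite, mul_one, mul_zero, Finset.sum_ite_eq]
    split_ifs
    exacts [hσ j, by simp]
  rw [hnorm]
  linarith [hR.readNorm_le zero_le_one hcoord]

theorem two_thirds_le_diam_inter_closedBall (hR : IsReadNormData r v) (hr2 : ∑' n, r n ≤ 2)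
    (hc0 : ∀ x, Tendsto (e x) atTop (𝓝 0)) (hnorm : ∀ x, ‖x‖ = readNorm r v (e x))
    (hu : ∀ k, e (u k) = Pi.single k 1) {U : Set X} (hU : IsOpen[weakTopology X] U) {x : X}
    (hxU : x ∈ U) (hx : ‖x‖ ≤ 1) : 2 / 3 ≤ Metric.diam (U ∩ Metric.closedBall 0 1) := by
  set t := 1 - ∑' n, r n * |pairing (e x) (v n)|
  have hbdd : BddAbove (Set.range fun k => |e x k|) := (hc0 x).abs.bddAbove_range
  have hx' : readNorm r v (e x) ≤ 1 := hnorm x ▸ hx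
  have ht : 1 / 3 ≤ t := hR.one_third_le_one_sub_tsum hr2 hbdd hx'
  have hcoord : ∀ j, |e x j| ≤ t := fun j => by
    have := abs_le_supNorm hbdd j
    rw [readNorm] at hx'
    linarith
  have hperturb : ∀ c, |c| = t → ∀ k,
      ‖x + c • u k‖ ≤ 1 + (|e x k| + t * ∑' n, r n * |v n k|) := fun c hc k => by
    rw [hnorm, map_add, map_smul, hu, ← hc]
    have := hR.readNorm_add_smul_single_le (fun j => hc ▸ hcoord j) k
    linarith
  have hA : ∀ k, 0 ≤ ∑' n, r n * |v n k| := fun k =>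
    tsum_nonneg fun n => mul_nonneg (hR.nonneg n) (abs_nonneg _)
  have hu1 : ∀ k, 1 ≤ ‖u k‖ := fun k => by
    rw [hnorm, hu, readNorm_single]
    exact le_add_of_nonneg_right (hA k)
  have := two_mul_le_diam_inter_closedBall (tendsto_apply_zero_of_map_eq_single hR hr2 hnorm hu)
    hu1 (fun k => add_nonneg (abs_nonneg _) (mul_nonneg (by linarith) (hA k)))
    (by simpa using (hc0 x).abs.add (hR.tendsto_tsum_mul_abs.const_mul t))
    (hperturb t (abs_of_nonneg (by linarith)))
    (fun k => by simpa [sub_eq_add_neg] using hperturb (-t) (by simp; linarith) k) hU hxU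
  linarith

end ReadSpace

/-- Read's space `ℛ` is presented as a normed space `X` linearly isometric, via `e`, to `c₀`
with the norm `|||·|||`; the weak topology on `X` is induced by the evaluation map
`X → (X* → ℝ)`. -/
theorem read_slices_and_weak_open_subsets_big_general
    (r : ℕ → ℝ) (hrpos : ∀ n, 0 < r n) (hrsum : Summable r) (hr2 : ∑' n, r n ≤ 2)
    (v : ℕ → ℕ → ℝ) (hv1 : ∀ n, Summable fun k => |v n k|)
    (hv2 : ∀ n, ∑' k, |v n k| = 1)
    (X : Type*) [NormedAddCommGroup X] [NormedSpace ℝ X]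
    (e : X →ₗ[ℝ] (ℕ → ℝ))
    (hc0 : ∀ x, Tendsto (e x) atTop (𝓝 0))
    (hsurj : ∀ f : ℕ → ℝ, Tendsto f atTop (𝓝 0) → ∃ x, e x = f)
    (hnorm : ∀ x, ‖x‖ = readNorm r v (e x)) :
    (∀ f : StrongDual ℝ X, ‖f‖ = 1 → ∀ δ > 0,
      2 / 3 ≤ Metric.diam {x | x ∈ Metric.closedBall (0 : X) 1 ∧ 1 - δ < f x}) ∧
    (∀ U : Set X,
      @IsOpen X (.induced (fun x => fun g : StrongDual ℝ X => g x) Pi.topologicalSpace) U →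
      (U ∩ Metric.closedBall (0 : X) 1).Nonempty →
      2 / 3 ≤ Metric.diam (U ∩ Metric.closedBall (0 : X) 1)) := by
  have hR : IsReadNormData r v := ⟨fun n => (hrpos n).le, hrsum, hv1, hv2⟩
  have hsingle : ∀ k, Tendsto (Pi.single k 1 : ℕ → ℝ) atTop (𝓝 0) := fun k =>
    tendsto_const_nhds.congr' <| (eventually_gt_atTop k).mono fun j hj => by simp [hj.ne']
  choose u hu using fun k => hsurj _ (hsingle k)
  have hweak : ∀ U : Set X, IsOpen[weakTopology X] U → (U ∩ Metric.closedBall 0 1).Nonempty →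
      2 / 3 ≤ Metric.diam (U ∩ Metric.closedBall 0 1) := fun U hU ⟨x, hxU, hx⟩ =>
    two_thirds_le_diam_inter_closedBall hR hr2 hc0 hnorm hu hU hxU (mem_closedBall_zero_iff.1 hx)
  refine ⟨fun f hf δ hδ => ?_, hweak⟩
  obtain ⟨x, hx, hfx⟩ := f.exists_norm_le_one_lt_apply hδ
  have hslice : IsOpen[weakTopology X] {x | 1 - δ < f x} :=
    isOpen_induced_iff.2 ⟨_, isOpen_Ioi.preimage (continuous_apply f), rfl⟩
  have := hweak _ hslice ⟨x, hf ▸ hfx, mem_closedBall_zero_iff.2 hx⟩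
  rwa [Set.inter_comm] at this

/-- Every slice of the unit ball of Read's space `ℛ` has diameter at least `2/3`;
more generally, every nonempty relatively weakly open subset of the unit ball of `ℛ`
has diameter at least `2/3`.  Read's space is presented as a normed space `X`
linearly isometric, via `e`, to `c₀` with the norm `|||·|||`; the weak topology on
`X` is the topology induced by the natural map from `X` into `(X* → ℝ)` with the
topology of pointwise convergence. -/
theorem read_slices_and_weak_open_subsets_big
    (r : ℕ → ℝ) (hrpos : ∀ n, 0 < r n) (hrsum : Summable r) (hr2 : ∑' n, r n ≤ 2)
    (v : ℕ → ℕ → ℝ) (hv1 : ∀ n, Summable fun k => |v n k|)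
    (hv2 : ∀ n, ∑' k, |v n k| = 1)
    (hdense : ∀ w : ℕ → ℝ, (Summable fun k => |w k|) → ∑' k, |w k| = 1 →
      ∀ ε > 0, ∃ n, ∑' k, |w k - v n k| < ε)
    (X : Type*) [NormedAddCommGroup X] [NormedSpace ℝ X]
    (e : X →ₗ[ℝ] (ℕ → ℝ)) (hinj : Function.Injective e)
    (hc0 : ∀ x, Tendsto (e x) atTop (𝓝 0))
    (hsurj : ∀ f : ℕ → ℝ, Tendsto f atTop (𝓝 0) → ∃ x, e x = f)
    (hnorm : ∀ x, ‖x‖ = readNorm r v (e x)) :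
    (∀ f : StrongDual ℝ X, ‖f‖ = 1 → ∀ δ > 0,
      2 / 3 ≤ Metric.diam {x | x ∈ Metric.closedBall (0 : X) 1 ∧ 1 - δ < f x}) ∧
    (∀ U : Set X,
      @IsOpen X (.induced (fun x => fun g : StrongDual ℝ X => g x) Pi.topologicalSpace) U →
      (U ∩ Metric.closedBall (0 : X) 1).Nonempty →
      2 / 3 ≤ Metric.diam (U ∩ Metric.closedBall (0 : X) 1)) :=
  read_slices_and_weak_open_subsets_big_general r hrpos hrsum hr2 v hv1 hv2 X e hc0 hsurj hnorm
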